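/- Fix ε > 0 and η ∈ C_c^1(ℝ^N; ℝ). Define I(ρ)(x) = -ε (ρ*∇η)(x) / √(1 + ‖(ρ*∇η)(x)‖²). Then for all r₁, r₂ ∈ L¹(ℝ^N; [0,R]), ‖I(r₁) - I(r₂)‖_{L¹} ≤ ε (1 + R² ‖∇η‖_{L¹}²) ‖∇η‖_{L¹} ‖r₁ - r₂‖_{L¹}. -/

import Mathlib

/-!
The map `v ↦ v / √(1 + ‖v‖²)` is `(1 + M²)`-Lipschitz on the ball of radius `M`, and a
convolution `ρ * ∇η` with `|ρ| ≤ R` has sup norm at most `M = R ‖∇η‖_{L¹}`. Hence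
`‖I(r₁)(x) - I(r₂)(x)‖ ≤ ε (1 + M²) (|r₁ - r₂| * ‖∇η‖)(x)` pointwise, and integrating this
gives the bound, since the integral of a convolution is the product of the integrals.
-/

open MeasureTheory ContinuousLinearMap
open scoped Convolution

theorem abs_sqrt_one_add_sq_sub_le {s t M : ℝ} (hs : |s| ≤ M) (ht : |t| ≤ M) :
    |√(1 + s ^ 2) - √(1 + t ^ 2)| ≤ M * |s - t| := by
  set A := √(1 + s ^ 2)
  set B := √(1 + t ^ 2)
  have hA : 1 ≤ A := Real.one_le_sqrt.2 (by nlinarith)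
  have hB : 1 ≤ B := Real.one_le_sqrt.2 (by nlinarith)
  have hAB : 0 < A + B := by linarith
  have hdiff : (A - B) * (A + B) = (s - t) * (s + t) := by
    have : (A - B) * (A + B) = A ^ 2 - B ^ 2 := by ring
    rw [this, Real.sq_sqrt (by positivity), Real.sq_sqrt (by positivity)]
    ring
  have : |A - B| * 2 ≤ |s - t| * (2 * M) := by
    calc |A - B| * 2 ≤ |A - B| * (A + B) := by gcongr; linarith
      _ = |s - t| * |s + t| := by rw [← abs_of_pos hAB, ← abs_mul, hdiff, abs_mul]
      _ ≤ |s - t| * (2 * M) := by gcongr; exact (abs_add_le s t).trans (by linarith)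
  linarith

noncomputable def softNormalize {F : Type*} [NormedAddCommGroup F] [NormedSpace ℝ F] (v : F) : F :=
  (√(1 + ‖v‖ ^ 2))⁻¹ • v

theorem norm_softNormalize_sub_le {F : Type*} [NormedAddCommGroup F] [NormedSpace ℝ F]
    {M : ℝ} {a b : F} (ha : ‖a‖ ≤ M) (hb : ‖b‖ ≤ M) :
    ‖softNormalize a - softNormalize b‖ ≤ (1 + M ^ 2) * ‖a - b‖ := by
  set A := √(1 + ‖a‖ ^ 2)
  set B := √(1 + ‖b‖ ^ 2)
  have hA : 1 ≤ A := Real.one_le_sqrt.2 (by nlinarith [sq_nonneg ‖a‖])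
  have hB : 1 ≤ B := Real.one_le_sqrt.2 (by nlinarith [sq_nonneg ‖b‖])
  have hM : 0 ≤ M := (norm_nonneg a).trans ha
  have hBA : |B - A| ≤ M * ‖a - b‖ := by
    rw [abs_sub_comm]
    refine (abs_sqrt_one_add_sq_sub_le (M := M) (by rwa [abs_norm]) (by rwa [abs_norm])).trans ?_
    exact mul_le_mul_of_nonneg_left (abs_norm_sub_norm_le a b) hM
  have hinv : |A⁻¹ - B⁻¹| ≤ |B - A| := by
    have hA0 : A ≠ 0 := by positivity
    have hB0 : B ≠ 0 := by positivity
    rw [inv_sub_inv hA0 hB0, abs_div, abs_of_pos (show 0 < A * B by positivity)]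
    exact div_le_self (abs_nonneg _) (one_le_mul_of_one_le_of_one_le hA hB)
  calc ‖softNormalize a - softNormalize b‖ = ‖A⁻¹ • (a - b) + (A⁻¹ - B⁻¹) • b‖ := by
        rw [smul_sub, sub_smul, sub_add_sub_cancel]; rfl
    _ ≤ A⁻¹ * ‖a - b‖ + |A⁻¹ - B⁻¹| * ‖b‖ := by
        refine (norm_add_le _ _).trans_eq ?_
        rw [norm_smul, norm_smul, Real.norm_of_nonneg (by positivity), Real.norm_eq_abs]
    _ ≤ 1 * ‖a - b‖ + (M * ‖a - b‖) * M := by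
        gcongr
        · exact inv_le_one_of_one_le₀ hA
        · exact hinv.trans hBA
    _ = (1 + M ^ 2) * ‖a - b‖ := by ring

theorem ContDiff.continuous_gradient {𝕜 F : Type*} [RCLike 𝕜] [NormedAddCommGroup F]
    [InnerProductSpace 𝕜 F] [CompleteSpace F] {f : F → 𝕜} (hf : ContDiff 𝕜 1 f) :
    Continuous (gradient f) :=
  (InnerProductSpace.toDual 𝕜 F).symm.continuous.comp (hf.continuous_fderiv one_ne_zero)

theorem HasCompactSupport.gradient {𝕜 F : Type*} [RCLike 𝕜] [NormedAddCommGroup F]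
    [InnerProductSpace 𝕜 F] [CompleteSpace F] {f : F → 𝕜} (hf : HasCompactSupport f) :
    HasCompactSupport (gradient f) :=
  hf.fderiv (𝕜 := 𝕜) |>.comp_left (map_zero _)

section Convolution

variable {G E : Type*} [MeasurableSpace G] {μ : Measure G} [NormedAddCommGroup E]
  [NormedSpace ℝ E]

theorem norm_convolution_lsmul_sub_le [Sub G] {f₁ f₂ : G → ℝ} {g : G → E} {x : G}
    (h₁ : ConvolutionExistsAt f₁ g x (lsmul ℝ ℝ) μ)
    (h₂ : ConvolutionExistsAt f₂ g x (lsmul ℝ ℝ) μ) :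
    ‖(f₁ ⋆[lsmul ℝ ℝ, μ] g) x - (f₂ ⋆[lsmul ℝ ℝ, μ] g) x‖ ≤
      ((fun y ↦ |f₁ y - f₂ y|) ⋆[mul ℝ ℝ, μ] fun y ↦ ‖g y‖) x := by
  rw [convolution_def, convolution_def, ← integral_sub h₁ h₂]
  refine (norm_integral_le_integral_norm _).trans_eq ?_
  simp only [convolution_def, lsmul_apply, mul_apply', ← sub_smul, norm_smul, Real.norm_eq_abs]

theorem norm_convolution_lsmul_le [AddGroup G] [MeasurableAdd G] [MeasurableNeg G]
    [μ.IsAddLeftInvariant] [μ.IsNegInvariant] {f : G → ℝ} {g : G → E} {R : ℝ}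
    (hf : ∀ y, |f y| ≤ R) (hg : Integrable g μ) (x : G) :
    ‖(f ⋆[lsmul ℝ ℝ, μ] g) x‖ ≤ R * ∫ y, ‖g y‖ ∂μ := by
  rw [convolution_def, ← integral_sub_left_eq_self (fun y ↦ ‖g y‖) μ x, ← integral_const_mul]
  refine norm_integral_le_of_norm_le ((hg.norm.comp_sub_left x).const_mul R) (ae_of_all _ ?_)
  intro y
  rw [lsmul_apply, norm_smul, Real.norm_eq_abs]
  exact mul_le_mul_of_nonneg_right (hf y) (norm_nonneg _)

theorem integral_norm_softNormalize_convolution_sub_le [AddCommGroup G] [MeasurableAdd₂ G]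
    [MeasurableNeg G] [SFinite μ] [μ.IsAddLeftInvariant] [μ.IsNegInvariant]
    {f₁ f₂ : G → ℝ} {g : G → E} {R : ℝ} (hf₁ : Integrable f₁ μ) (hf₂ : Integrable f₂ μ)
    (hR₁ : ∀ y, |f₁ y| ≤ R) (hR₂ : ∀ y, |f₂ y| ≤ R) (hg : Integrable g μ)
    (h₁ : ConvolutionExists f₁ g (lsmul ℝ ℝ) μ) (h₂ : ConvolutionExists f₂ g (lsmul ℝ ℝ) μ) :
    ∫ x, ‖softNormalize ((f₁ ⋆[lsmul ℝ ℝ, μ] g) x) - softNormalize ((f₂ ⋆[lsmul ℝ ℝ, μ] g) x)‖ ∂μ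
      ≤ (1 + (R * ∫ y, ‖g y‖ ∂μ) ^ 2) * (∫ y, ‖g y‖ ∂μ) * ∫ y, |f₁ y - f₂ y| ∂μ := by
  set K := ∫ y, ‖g y‖ ∂μ
  have hd : Integrable (fun y ↦ |f₁ y - f₂ y|) μ := (hf₁.sub hf₂).abs
  have hdiff : Integrable ((fun y ↦ |f₁ y - f₂ y|) ⋆[mul ℝ ℝ, μ] fun y ↦ ‖g y‖) μ :=
    hd.integrable_convolution _ hg.norm
  calc _ ≤ ∫ x, (1 + (R * K) ^ 2) *
          ((fun y ↦ |f₁ y - f₂ y|) ⋆[mul ℝ ℝ, μ] fun y ↦ ‖g y‖) x ∂μ := by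
        refine integral_mono_of_nonneg (ae_of_all _ fun _ ↦ norm_nonneg _) (hdiff.const_mul _)
          (ae_of_all _ fun x ↦ ?_)
        refine (norm_softNormalize_sub_le (norm_convolution_lsmul_le hR₁ hg x)
          (norm_convolution_lsmul_le hR₂ hg x)).trans ?_
        exact mul_le_mul_of_nonneg_left (norm_convolution_lsmul_sub_le (h₁ x) (h₂ x))
          (by positivity)
    _ = (1 + (R * K) ^ 2) * ((∫ y, |f₁ y - f₂ y| ∂μ) * K) := by
        rw [integral_const_mul, integral_convolution _ hd hg.norm, mul_apply']
    _ = _ := by ring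

end Convolution

theorem stmt4_general (N : ℕ) (ε R : ℝ) (hε : 0 < ε)
    (η : EuclideanSpace ℝ (Fin N) → ℝ) (hη : ContDiff ℝ 1 η)
    (hηc : HasCompactSupport η)
    (I : (EuclideanSpace ℝ (Fin N) → ℝ) → EuclideanSpace ℝ (Fin N) → EuclideanSpace ℝ (Fin N))
    (hI : ∀ ρ x, I ρ x =
      -((ε * (Real.sqrt (1 + ‖∫ y, ρ y • gradient η (x - y)‖ ^ 2))⁻¹) •
        ∫ y, ρ y • gradient η (x - y)))
    (r₁ r₂ : EuclideanSpace ℝ (Fin N) → ℝ)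
    (h1 : Integrable r₁) (h2 : Integrable r₂)
    (hb1 : ∀ x, r₁ x ∈ Set.Icc 0 R) (hb2 : ∀ x, r₂ x ∈ Set.Icc 0 R) :
    (∫ x, ‖I r₁ x - I r₂ x‖) ≤
      ε * (1 + R ^ 2 * (∫ z, ‖gradient η z‖) ^ 2) * (∫ z, ‖gradient η z‖) *
        ∫ y, |r₁ y - r₂ y| := by
  set g := gradient η
  have hg_int : Integrable g := hη.continuous_gradient.integrable_of_hasCompactSupport hηc.gradient
  have hconv {ρ : EuclideanSpace ℝ (Fin N) → ℝ} (hρ : Integrable ρ) :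
      ConvolutionExists ρ g (lsmul ℝ ℝ) volume :=
    hηc.gradient.convolutionExists_right _ hρ.locallyIntegrable hη.continuous_gradient
  have hI_eq ρ x : I ρ x = -(ε • softNormalize ((ρ ⋆[lsmul ℝ ℝ] g) x)) := by
    rw [hI, mul_smul]; rfl
  have habs {ρ : EuclideanSpace ℝ (Fin N) → ℝ} (hρ : ∀ x, ρ x ∈ Set.Icc 0 R) x : |ρ x| ≤ R :=
    (abs_of_nonneg (hρ x).1).trans_le (hρ x).2
  calc ∫ x, ‖I r₁ x - I r₂ x‖
      = ε * ∫ x, ‖softNormalize ((r₁ ⋆[lsmul ℝ ℝ] g) x) - softNormalize ((r₂ ⋆[lsmul ℝ ℝ] g) x)‖ := by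
        simp_rw [hI_eq, neg_sub_neg, ← smul_sub, norm_smul, Real.norm_of_nonneg hε.le,
          norm_sub_rev]
        exact integral_const_mul _ _
    _ ≤ ε * ((1 + (R * ∫ z, ‖g z‖) ^ 2) * (∫ z, ‖g z‖) * ∫ y, |r₁ y - r₂ y|) := by
        gcongr
        exact integral_norm_softNormalize_convolution_sub_le h1 h2 (habs hb1) (habs hb2) hg_int
          (hconv h1) (hconv h2)
    _ = _ := by ring

/-- Lipschitz estimate in `L¹` for the nonlocal deviation operator
`I(ρ) = -ε (ρ*∇η)/√(1+‖ρ*∇η‖²)`: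
`‖I(r₁) - I(r₂)‖_{L¹} ≤ ε (1 + R²‖∇η‖_{L¹}²) ‖∇η‖_{L¹} ‖r₁ - r₂‖_{L¹}`. -/
theorem stmt4 (N : ℕ) (hN : 0 < N) (ε R : ℝ) (hε : 0 < ε) (hR : 0 < R)
    (η : EuclideanSpace ℝ (Fin N) → ℝ) (hη : ContDiff ℝ 1 η)
    (hηc : HasCompactSupport η)
    (I : (EuclideanSpace ℝ (Fin N) → ℝ) → EuclideanSpace ℝ (Fin N) → EuclideanSpace ℝ (Fin N))
    (hI : ∀ ρ x, I ρ x =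
      -((ε * (Real.sqrt (1 + ‖∫ y, ρ y • gradient η (x - y)‖ ^ 2))⁻¹) •
        ∫ y, ρ y • gradient η (x - y)))
    (r₁ r₂ : EuclideanSpace ℝ (Fin N) → ℝ)
    (h1 : Integrable r₁) (h2 : Integrable r₂)
    (hb1 : ∀ x, r₁ x ∈ Set.Icc 0 R) (hb2 : ∀ x, r₂ x ∈ Set.Icc 0 R) :
    (∫ x, ‖I r₁ x - I r₂ x‖) ≤
      ε * (1 + R ^ 2 * (∫ z, ‖gradient η z‖) ^ 2) * (∫ z, ‖gradient η z‖) *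
        ∫ y, |r₁ y - r₂ y| :=
  stmt4_general N ε R hε η hη hηc I hI r₁ r₂ h1 h2 hb1 hb2
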